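/- Let G be a connected graph with adjacency eigenvalues λ₁ ≥ ⋯ ≥ λₙ, normalized Perron eigenvector ν (‖ν‖ = 1), and λ = max{|λ₂|, |λₙ|}. Then for any vertex subsets S, T: |e(S,T) − λ₁⟨χ_S, ν⟩⟨χ_T, ν⟩| ≤ λ·sqrt((|S| − ⟨χ_S,ν⟩²)(|T| − ⟨χ_T,ν⟩²)). -/
import Mathlib


open Matrix Finset

open scoped InnerProductSpace

lemma aux_inner_dot {n : ℕ} (x y : EuclideanSpace ℝ (Fin n)) :
    ⟪x, y⟫_ℝ = (⇑x) ⬝ᵥ (⇑y) := by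
  simp [PiLp.inner_apply, RCLike.inner_apply, dotProduct, mul_comm]

lemma aux_parseval {n : ℕ} (b : OrthonormalBasis (Fin n) ℝ (EuclideanSpace ℝ (Fin n)))
    (x y : Fin n → ℝ) :
    x ⬝ᵥ y = ∑ i, (⇑(b i) ⬝ᵥ x) * (⇑(b i) ⬝ᵥ y) := by
  have key : ∀ u v : EuclideanSpace ℝ (Fin n),
      (⇑u) ⬝ᵥ (⇑v) = ∑ i, (⇑(b i) ⬝ᵥ ⇑u) * (⇑(b i) ⬝ᵥ ⇑v) := by
    intro u v
    rw [← aux_inner_dot, ← b.repr.inner_map_map u v, aux_inner_dot]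
    rw [show (⇑(b.repr u) ⬝ᵥ ⇑(b.repr v)) = ∑ i, b.repr u i * b.repr v i from rfl]
    congr 1; ext i
    rw [b.repr_apply_apply, b.repr_apply_apply, aux_inner_dot, aux_inner_dot]
  exact key ((WithLp.equiv 2 _).symm x) ((WithLp.equiv 2 _).symm y)

lemma aux_sym {n : ℕ} {A : Matrix (Fin n) (Fin n) ℝ} (hAH : A.IsHermitian)
    (x y : Fin n → ℝ) : x ⬝ᵥ (A *ᵥ y) = (A *ᵥ x) ⬝ᵥ y := by
  have hsym : Aᵀ = A := by
    have := hAH.eq; rwa [conjTranspose_eq_transpose_of_trivial] at this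
  rw [Matrix.dotProduct_mulVec, ← Matrix.mulVec_transpose, hsym]

lemma aux_spectral {n : ℕ} (A : Matrix (Fin n) (Fin n) ℝ) (hAH : A.IsHermitian)
    (x y : Fin n → ℝ) :
    x ⬝ᵥ (A *ᵥ y) = ∑ i, hAH.eigenvalues i * (⇑(hAH.eigenvectorBasis i) ⬝ᵥ x)
      * (⇑(hAH.eigenvectorBasis i) ⬝ᵥ y) := by
  rw [aux_parseval hAH.eigenvectorBasis x (A *ᵥ y)]
  congr 1; ext i
  rw [show ⇑(hAH.eigenvectorBasis i) ⬝ᵥ (A *ᵥ y)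
      = hAH.eigenvalues i * (⇑(hAH.eigenvectorBasis i) ⬝ᵥ y) by
    rw [aux_sym hAH, hAH.mulVec_eigenvectorBasis, smul_dotProduct]; rfl]
  ring

/-- **Perron Expander Mixing Lemma.** For a connected graph `G` with adjacency
eigenvalues `lam ⟨0, by omega⟩ ≥ ⋯ ≥ lam (n-1)`, normalized Perron eigenvector `ν` and
`lamAbs = max {|λ₂|, |λₙ|}`, for all vertex subsets `S, T`:
`|e(S,T) − λ₁⟨χ_S,ν⟩⟨χ_T,ν⟩| ≤ λ √((|S| − ⟨χ_S,ν⟩²)(|T| − ⟨χ_T,ν⟩²))`. -/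
theorem perron_expander_mixing {n : ℕ} (hn : 2 ≤ n)
    (G : SimpleGraph (Fin n)) [DecidableRel G.Adj] (hG : G.Connected)
    (A : Matrix (Fin n) (Fin n) ℝ) (hA : A = G.adjMatrix ℝ)
    (hAH : A.IsHermitian)
    (lam : Fin n → ℝ) (hmono : Antitone lam)
    (heig : ∃ e : Fin n ≃ Fin n, ∀ i, lam i = hAH.eigenvalues (e i))
    (ν : Fin n → ℝ) (hνpos : ∀ i, 0 < ν i) (hνnorm : ∑ i, ν i ^ 2 = 1)
    (hνeig : A *ᵥ ν = lam ⟨0, by omega⟩ • ν)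
    (lamAbs : ℝ)
    (hlamAbs : lamAbs = max |lam ⟨1, by omega⟩| |lam ⟨n - 1, by omega⟩|)
    (S T : Finset (Fin n)) :
    |(fun u => if u ∈ S then (1 : ℝ) else 0) ⬝ᵥ
        (A *ᵥ fun u => if u ∈ T then (1 : ℝ) else 0)
      - lam ⟨0, by omega⟩ * (∑ i ∈ S, ν i) * (∑ i ∈ T, ν i)|
      ≤ lamAbs * Real.sqrt (((S.card : ℝ) - (∑ i ∈ S, ν i) ^ 2) *
          ((T.card : ℝ) - (∑ i ∈ T, ν i) ^ 2)) := by
  obtain ⟨e, he⟩ := heig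
  set χS : Fin n → ℝ := fun u => if u ∈ S then 1 else 0 with hχS
  set χT : Fin n → ℝ := fun u => if u ∈ T then 1 else 0 with hχT
  set α := ∑ i ∈ S, ν i with hα
  set β := ∑ i ∈ T, ν i with hβ
  set lam0 := lam ⟨0, by omega⟩ with hlam0
  set lam1 := lam ⟨1, by omega⟩ with hlam1
  set lamlast := lam ⟨n - 1, by omega⟩ with hlamlast
  -- basic dot products
  have hSν : χS ⬝ᵥ ν = α := by
    simp [hχS, dotProduct, ite_mul, hα, Finset.sum_ite_mem]
  have hTν : χT ⬝ᵥ ν = β := by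
    simp [hχT, dotProduct, ite_mul, hβ, Finset.sum_ite_mem]
  have hSS : χS ⬝ᵥ χS = (S.card : ℝ) := by simp [hχS, dotProduct]
  have hTT : χT ⬝ᵥ χT = (T.card : ℝ) := by simp [hχT, dotProduct]
  have hνν : ν ⬝ᵥ ν = 1 := by
    rw [show ν ⬝ᵥ ν = ∑ i, ν i ^ 2 by simp [dotProduct, pow_two], hνnorm]
  set s : Fin n → ℝ := χS - α • ν with hs
  set t : Fin n → ℝ := χT - β • ν with ht
  have hνs : ν ⬝ᵥ s = 0 := by
    rw [hs, dotProduct_sub, dotProduct_smul, dotProduct_comm ν χS, hSν, hνν]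
    simp
  have hνt : ν ⬝ᵥ t = 0 := by
    rw [ht, dotProduct_sub, dotProduct_smul, dotProduct_comm ν χT, hTν, hνν]
    simp
  -- main identity
  have hνAT : ν ⬝ᵥ (A *ᵥ χT) = lam0 * β := by
    rw [aux_sym hAH, hνeig, smul_dotProduct, dotProduct_comm ν χT, hTν]; rfl
  have hmain : χS ⬝ᵥ (A *ᵥ χT) - lam0 * α * β = s ⬝ᵥ (A *ᵥ t) := by
    have hAt : A *ᵥ t = A *ᵥ χT - β • lam0 • ν := by
      rw [ht, Matrix.mulVec_sub, Matrix.mulVec_smul, hνeig]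
    rw [hs, hAt]
    simp only [sub_dotProduct, dotProduct_sub, smul_dotProduct, dotProduct_smul,
      smul_eq_mul, hνAT, hνν, hSν]
    ring
  -- norms
  have hss : s ⬝ᵥ s = (S.card : ℝ) - α ^ 2 := by
    rw [hs]
    simp only [sub_dotProduct, dotProduct_sub, smul_dotProduct, dotProduct_smul,
      smul_eq_mul, dotProduct_comm ν χS, hSν, hSS, hνν]
    ring
  have htt : t ⬝ᵥ t = (T.card : ℝ) - β ^ 2 := by
    rw [ht]
    simp only [sub_dotProduct, dotProduct_sub, smul_dotProduct, dotProduct_smul,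
      smul_eq_mul, dotProduct_comm ν χT, hTν, hTT, hνν]
    ring
  -- eigen-coefficient facts
  have hν_coeff : ∀ j, (hAH.eigenvalues j - lam0) * (⇑(hAH.eigenvectorBasis j) ⬝ᵥ ν) = 0 := by
    intro j
    have h1 : ⇑(hAH.eigenvectorBasis j) ⬝ᵥ (A *ᵥ ν)
        = ⇑(hAH.eigenvectorBasis j) ⬝ᵥ (lam0 • ν) := by rw [hνeig]
    rw [aux_sym hAH, hAH.mulVec_eigenvectorBasis, smul_dotProduct,
      dotProduct_smul, smul_eq_mul, smul_eq_mul] at h1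
    linear_combination h1
  have hlameq : ∀ i, hAH.eigenvalues i = lam (e.symm i) := by
    intro i; rw [he (e.symm i), Equiv.apply_symm_apply]
  have hlow : ∀ i, lamlast ≤ hAH.eigenvalues i := by
    intro i
    rw [hlameq i, hlamlast]
    apply hmono
    rw [Fin.le_def]
    show (e.symm i).val ≤ n - 1
    have := (e.symm i).isLt
    omega
  have hlamAbs_nonneg : 0 ≤ lamAbs := by
    rw [hlamAbs]; exact le_trans (abs_nonneg _) (le_max_left _ _)
  have hgood : ∀ i, hAH.eigenvalues i ≤ lam1 → |hAH.eigenvalues i| ≤ lamAbs := by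
    intro i hi
    rw [abs_le]
    constructor
    · have h1 : |lamlast| ≤ lamAbs := hlamAbs ▸ le_max_right _ _
      have := hlow i
      have := neg_abs_le lamlast
      linarith
    · have h1 : |lam1| ≤ lamAbs := hlamAbs ▸ le_max_left _ _
      have := le_abs_self lam1
      linarith
  -- bad index: coefficients vanish
  have hbad : ∀ i, lam1 < hAH.eigenvalues i →
      ⇑(hAH.eigenvectorBasis i) ⬝ᵥ s = 0 ∧ ⇑(hAH.eigenvectorBasis i) ⬝ᵥ t = 0 := by
    intro i hi
    have h0 : e.symm i = (⟨0, by omega⟩ : Fin n) := by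
      by_contra hc
      have h1 : (⟨1, by omega⟩ : Fin n) ≤ e.symm i := by
        rw [Fin.le_def]
        show 1 ≤ (e.symm i).val
        have : (e.symm i).val ≠ 0 := fun hz => hc (Fin.ext hz)
        omega
      have h2 := hmono h1
      rw [← hlameq i, ← hlam1] at h2
      linarith
    have hμi : hAH.eigenvalues i = lam0 := by rw [hlameq i, h0, hlam0]
    have hcν0 : ∀ j, j ≠ i → ⇑(hAH.eigenvectorBasis j) ⬝ᵥ ν = 0 := by
      intro j hj
      have hne : e.symm j ≠ (⟨0, by omega⟩ : Fin n) := by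
        intro hz
        exact hj (e.symm.injective (hz.trans h0.symm))
      have h1 : (⟨1, by omega⟩ : Fin n) ≤ e.symm j := by
        rw [Fin.le_def]
        show 1 ≤ (e.symm j).val
        have : (e.symm j).val ≠ 0 := fun hz => hne (Fin.ext hz)
        omega
      have h2 : hAH.eigenvalues j ≤ lam1 := by
        rw [hlameq j]; exact hlam1 ▸ hmono h1
      have h3 : hAH.eigenvalues j - lam0 ≠ 0 := by
        rw [← hμi]; intro hz; linarith [sub_eq_zero.mp hz ▸ hi]
      exact (mul_eq_zero.mp (hν_coeff j)).resolve_left h3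
    have hνν2 : (⇑(hAH.eigenvectorBasis i) ⬝ᵥ ν) * (⇑(hAH.eigenvectorBasis i) ⬝ᵥ ν) = 1 := by
      have hp := aux_parseval hAH.eigenvectorBasis ν ν
      rw [hνν, Finset.sum_eq_single i] at hp
      · exact hp.symm
      · intro j _ hj; rw [hcν0 j hj]; ring
      · intro hj; exact absurd (Finset.mem_univ i) hj
    have hcνi : ⇑(hAH.eigenvectorBasis i) ⬝ᵥ ν ≠ 0 := by
      intro hz; rw [hz] at hνν2; simp at hνν2
    have hkill : ∀ x : Fin n → ℝ, ν ⬝ᵥ x = 0 → ⇑(hAH.eigenvectorBasis i) ⬝ᵥ x = 0 := by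
      intro x hx
      have hp := aux_parseval hAH.eigenvectorBasis ν x
      rw [hx, Finset.sum_eq_single i] at hp
      · exact (mul_eq_zero.mp hp.symm).resolve_left hcνi
      · intro j _ hj; rw [hcν0 j hj]; ring
      · intro hj; exact absurd (Finset.mem_univ i) hj
    exact ⟨hkill s hνs, hkill t hνt⟩
  -- final estimate
  have hspec := aux_spectral A hAH s t
  have hps : s ⬝ᵥ s = ∑ i, (⇑(hAH.eigenvectorBasis i) ⬝ᵥ s) ^ 2 := by
    rw [aux_parseval hAH.eigenvectorBasis s s]
    exact Finset.sum_congr rfl fun i _ => (pow_two _).symm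
  have hpt : t ⬝ᵥ t = ∑ i, (⇑(hAH.eigenvectorBasis i) ⬝ᵥ t) ^ 2 := by
    rw [aux_parseval hAH.eigenvectorBasis t t]
    exact Finset.sum_congr rfl fun i _ => (pow_two _).symm
  have step1 : |∑ i, hAH.eigenvalues i * (⇑(hAH.eigenvectorBasis i) ⬝ᵥ s)
        * (⇑(hAH.eigenvectorBasis i) ⬝ᵥ t)|
      ≤ ∑ i, lamAbs * (|⇑(hAH.eigenvectorBasis i) ⬝ᵥ s| * |⇑(hAH.eigenvectorBasis i) ⬝ᵥ t|) := by
    refine le_trans (Finset.abs_sum_le_sum_abs _ _) (Finset.sum_le_sum fun i _ => ?_)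
    rw [abs_mul, abs_mul]
    by_cases hi : hAH.eigenvalues i ≤ lam1
    · have h0 := hgood i hi
      have h1 : (0:ℝ) ≤ |⇑(hAH.eigenvectorBasis i) ⬝ᵥ s| * |⇑(hAH.eigenvectorBasis i) ⬝ᵥ t| :=
        mul_nonneg (abs_nonneg _) (abs_nonneg _)
      calc |hAH.eigenvalues i| * |⇑(hAH.eigenvectorBasis i) ⬝ᵥ s| * |⇑(hAH.eigenvectorBasis i) ⬝ᵥ t|
          = |hAH.eigenvalues i| * (|⇑(hAH.eigenvectorBasis i) ⬝ᵥ s| * |⇑(hAH.eigenvectorBasis i) ⬝ᵥ t|) := by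
            ring
        _ ≤ lamAbs * (|⇑(hAH.eigenvectorBasis i) ⬝ᵥ s| * |⇑(hAH.eigenvectorBasis i) ⬝ᵥ t|) :=
            mul_le_mul_of_nonneg_right h0 h1
    · push_neg at hi
      rw [(hbad i hi).1]
      simp only [abs_zero, mul_zero, zero_mul]
      positivity
  have step2 : ∑ i, |⇑(hAH.eigenvectorBasis i) ⬝ᵥ s| * |⇑(hAH.eigenvectorBasis i) ⬝ᵥ t|
      ≤ Real.sqrt (∑ i, (⇑(hAH.eigenvectorBasis i) ⬝ᵥ s) ^ 2)
        * Real.sqrt (∑ i, (⇑(hAH.eigenvectorBasis i) ⬝ᵥ t) ^ 2) := by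
    have h := sum_mul_sq_le_sq_mul_sq Finset.univ
      (fun i => |⇑(hAH.eigenvectorBasis i) ⬝ᵥ s|) (fun i => |⇑(hAH.eigenvectorBasis i) ⬝ᵥ t|)
    simp only [sq_abs] at h
    have h2 : ∑ i, |⇑(hAH.eigenvectorBasis i) ⬝ᵥ s| * |⇑(hAH.eigenvectorBasis i) ⬝ᵥ t| =
        Real.sqrt ((∑ i, |⇑(hAH.eigenvectorBasis i) ⬝ᵥ s| * |⇑(hAH.eigenvectorBasis i) ⬝ᵥ t|) ^ 2) := by
      rw [Real.sqrt_sq (Finset.sum_nonneg fun i _ =>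
        mul_nonneg (abs_nonneg _) (abs_nonneg _))]
    rw [h2, ← Real.sqrt_mul (Finset.sum_nonneg fun i _ => sq_nonneg _)]
    exact Real.sqrt_le_sqrt h
  calc |χS ⬝ᵥ (A *ᵥ χT) - lam0 * α * β|
      = |∑ i, hAH.eigenvalues i * (⇑(hAH.eigenvectorBasis i) ⬝ᵥ s)
          * (⇑(hAH.eigenvectorBasis i) ⬝ᵥ t)| := by rw [hmain, hspec]
    _ ≤ ∑ i, lamAbs * (|⇑(hAH.eigenvectorBasis i) ⬝ᵥ s| * |⇑(hAH.eigenvectorBasis i) ⬝ᵥ t|) := step1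
    _ = lamAbs * ∑ i, |⇑(hAH.eigenvectorBasis i) ⬝ᵥ s| * |⇑(hAH.eigenvectorBasis i) ⬝ᵥ t| := by
        rw [Finset.mul_sum]
    _ ≤ lamAbs * (Real.sqrt (∑ i, (⇑(hAH.eigenvectorBasis i) ⬝ᵥ s) ^ 2)
          * Real.sqrt (∑ i, (⇑(hAH.eigenvectorBasis i) ⬝ᵥ t) ^ 2)) :=
        mul_le_mul_of_nonneg_left step2 hlamAbs_nonneg
    _ = lamAbs * Real.sqrt (((S.card : ℝ) - α ^ 2) * ((T.card : ℝ) - β ^ 2)) := by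
        rw [← hps, ← hpt, ← Real.sqrt_mul (by rw [hps]; positivity), hss, htt]
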